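/- For every positive integer n, 2 divides b_n' := ∑_{k=0}^n C(n,k) b_k and 5 divides b_n'' := ∑_{m=0}^n C(n,m) ∑_{k=0}^m C(m,k) b_k, where b_k = ∑_{j=0}^k C(k,j)^2 C(k+j,j). -/

import Mathlib

/-!
By Lucas's theorem the summands of `b_k` factor over base-`p` digits, and hence so does `b_k`
itself: `b_{pq+r} ≡ b_q b_r (mod p)` for `r < p`. As `c^p = c` in `ZMod p`, a digit-multiplicative
sequence agreeing with `c^r` on the digits `r < p` equals `c^k` everywhere. The first values give
`b_k ≡ 1 (mod 2)` and `b_k ≡ 3^k (mod 5)`, and the binomial theorem turns the transforms into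
`b_n' ≡ 2^n (mod 2)`, `b_m' ≡ 4^m (mod 5)` and `b_n'' ≡ 5^n (mod 5)`.
-/

open Finset

theorem Finset.sum_range_mul_eq_sum_sum {M : Type*} [AddCommMonoid M] (f : ℕ → M) (p m : ℕ) :
    ∑ j ∈ range (p * m), f j = ∑ a ∈ range m, ∑ b ∈ range p, f (p * a + b) := by
  induction m with
  | zero => simp
  | succ m ih => rw [Nat.mul_succ, sum_range_add, ih, sum_range_succ]

theorem sum_range_choose_mul_pow {R : Type*} [CommSemiring R] (c : R) (n : ℕ) :
    ∑ k ∈ range (n + 1), (n.choose k : R) * c ^ k = (c + 1) ^ n := by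
  simp [add_pow, mul_comm]

theorem eq_pow_of_map_mul_add {M : Type*} [Monoid M] {p : ℕ} (hp : 1 < p) {f : ℕ → M} {c : M}
    (hc : c ^ p = c) (hdigit : ∀ r < p, f r = c ^ r)
    (hmul : ∀ q, ∀ r < p, f (p * q + r) = f q * f r) (k : ℕ) : f k = c ^ k := by
  induction k using Nat.strong_induction_on with
  | _ k ih =>
    rcases lt_or_ge k p with hk | hk
    · exact hdigit k hk
    · have hdiv : k / p < k := Nat.div_lt_self (by omega) hp
      calc f k = f (p * (k / p) + k % p) := by rw [Nat.div_add_mod]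
        _ = c ^ (k / p) * c ^ (k % p) := by
          rw [hmul _ _ (Nat.mod_lt _ (by omega)), ih _ hdiv, hdigit _ (Nat.mod_lt _ (by omega))]
        _ = c ^ k := by rw [← Nat.div_add_mod k p, pow_add, pow_mul, hc, Nat.div_add_mod]

def aperyBTerm (k j : ℕ) : ℕ := k.choose j ^ 2 * (k + j).choose j

def aperyB (k : ℕ) : ℕ := ∑ j ∈ range (k + 1), aperyBTerm k j

theorem aperyB_eq_sum_range {k N : ℕ} (hN : k < N) :
    aperyB k = ∑ j ∈ range N, aperyBTerm k j := by
  refine sum_subset (range_subset_range.mpr hN) fun j _ hj => ?_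
  rw [mem_range, not_lt] at hj
  simp [aperyBTerm, Nat.choose_eq_zero_of_lt hj]

section Lucas

variable {p : ℕ} [Fact p.Prime]

theorem cast_choose_mul_add_mul_add {q r a b : ℕ} (hr : r < p) (hb : b < p) :
    ((p * q + r).choose (p * a + b) : ZMod p) = r.choose b * q.choose a := by
  have hp : 0 < p := (Fact.out : p.Prime).pos
  rw [(ZMod.natCast_eq_natCast_iff _ _ _).mpr Choose.choose_modEq_choose_mod_mul_choose_div_nat,
    Nat.cast_mul]
  simp [Nat.mul_add_div hp, Nat.mod_eq_of_lt, Nat.div_eq_of_lt, hr, hb]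

theorem cast_choose_mul_add_mul_add_eq_zero {t s a b : ℕ} (hsb : s < b) (hb : b < p) :
    ((p * t + s).choose (p * a + b) : ZMod p) = 0 := by
  rw [cast_choose_mul_add_mul_add (hsb.trans hb) hb, Nat.choose_eq_zero_of_lt hsb,
    Nat.cast_zero, zero_mul]

theorem cast_choose_add_mul_add {q r a b : ℕ} (hr : r < p) (hb : b < p) :
    ((p * q + r + (p * a + b)).choose (p * a + b) : ZMod p) =
      (q + a).choose a * (r + b).choose b := by
  rcases lt_or_ge (r + b) p with hrb | hrb
  · rw [show p * q + r + (p * a + b) = p * (q + a) + (r + b) by ring,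
      cast_choose_mul_add_mul_add hrb hb, mul_comm]
  · -- A carry: on both sides the last digit of the top, `r + b - p`, is smaller than `b`.
    have htop : p * q + r + (p * a + b) = p * (q + a + 1) + (r + b - p) := by
      zify [hrb]; ring
    have hcarry : ((r + b).choose b : ZMod p) = 0 := by
      have h := cast_choose_mul_add_mul_add_eq_zero (t := 1) (a := 0) (p := p)
        (show r + b - p < b by omega) hb
      rwa [mul_zero, zero_add, mul_one, Nat.add_sub_cancel' hrb] at h
    rw [htop, cast_choose_mul_add_mul_add_eq_zero (by omega) hb, hcarry, mul_zero]

theorem cast_aperyBTerm_mul_add {q r a b : ℕ} (hr : r < p) (hb : b < p) :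
    (aperyBTerm (p * q + r) (p * a + b) : ZMod p) = aperyBTerm q a * aperyBTerm r b := by
  simp only [aperyBTerm, Nat.cast_mul, Nat.cast_pow, cast_choose_mul_add_mul_add hr hb,
    cast_choose_add_mul_add hr hb]
  ring

theorem cast_aperyB_mul_add (q : ℕ) {r : ℕ} (hr : r < p) :
    (aperyB (p * q + r) : ZMod p) = aperyB q * aperyB r := by
  calc (aperyB (p * q + r) : ZMod p)
      = ∑ a ∈ range (q + 1), ∑ b ∈ range p, (aperyBTerm (p * q + r) (p * a + b) : ZMod p) := by
        rw [aperyB_eq_sum_range (N := p * (q + 1)) (by rw [mul_add_one]; omega), Nat.cast_sum,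
          sum_range_mul_eq_sum_sum]
    _ = ∑ a ∈ range (q + 1), ∑ b ∈ range p, (aperyBTerm q a : ZMod p) * aperyBTerm r b :=
        sum_congr rfl fun a _ => sum_congr rfl fun b hb =>
          cast_aperyBTerm_mul_add hr (mem_range.mp hb)
    _ = aperyB q * aperyB r := by
        rw [← sum_mul_sum, aperyB, aperyB_eq_sum_range hr]
        push_cast
        rfl

theorem cast_aperyB_eq_pow {c : ZMod p} (hdigit : ∀ r < p, (aperyB r : ZMod p) = c ^ r)
    (k : ℕ) : (aperyB k : ZMod p) = c ^ k :=
  eq_pow_of_map_mul_add (Fact.out : p.Prime).one_lt (ZMod.pow_card c) hdigit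
    (fun q _ hr => cast_aperyB_mul_add q hr) k

end Lucas

theorem apery_b_transforms_div (n : ℕ) (hn : 1 ≤ n) :
    (2 ∣ ∑ k ∈ Finset.range (n + 1), n.choose k *
        ∑ j ∈ Finset.range (k + 1), (k.choose j) ^ 2 * (k + j).choose j) ∧
      (5 ∣ ∑ m ∈ Finset.range (n + 1), n.choose m *
          ∑ k ∈ Finset.range (m + 1), m.choose k *
            ∑ j ∈ Finset.range (k + 1), (k.choose j) ^ 2 * (k + j).choose j) := by
  have : Fact (Nat.Prime 5) := ⟨Nat.prime_five⟩
  have hmod2 : ∀ k, (aperyB k : ZMod 2) = 1 ^ k :=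
    cast_aperyB_eq_pow fun r hr => by interval_cases r <;> rfl
  have hmod5 : ∀ k, (aperyB k : ZMod 5) = 3 ^ k :=
    cast_aperyB_eq_pow fun r hr => by interval_cases r <;> rfl
  change 2 ∣ ∑ k ∈ range (n + 1), n.choose k * aperyB k ∧
    5 ∣ ∑ m ∈ range (n + 1), n.choose m * ∑ k ∈ range (m + 1), m.choose k * aperyB k
  simp only [← ZMod.natCast_eq_zero_iff, Nat.cast_sum, Nat.cast_mul, hmod2, hmod5,
    sum_range_choose_mul_pow]
  rw [show (1 + 1 : ZMod 2) = 0 from rfl, show (3 + 1 + 1 : ZMod 5) = 0 from rfl]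
  exact ⟨zero_pow (by omega), zero_pow (by omega)⟩
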